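/- arXiv:2009.09639 — 4 statements merged into one kernel-verified Lean document; each statement's English description precedes it below -/
import Mathlib

section
/- Let Σ be a finite set, κ : Σ → ℤ a function with κ(w) ≥ 1 for all w ∈ Σ, and I ⊆ Σ a subset admissible with respect to κ. Let σ : Σ → Σ be a bijection such that κ(I)(σ(w)) = κ(I)(w) for all w ∈ Σ. Then κ(σ(w)) = κ(w) for all w ∈ Σ and σ(I) = I. (This is the combinatorial content of the paper's assertion that, for admissible I, the field ℚ(κ(I)) equals the compositum ℚ(κ)·ℚ(I) of fixed fields under the Aut(ℂ)-action permuting Σ.) -/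
/-! Since `κ ≥ 1`, both `κ w` and `2 - κ w` determine `κ w` (as `|x - 1| + 1`), so the twisted
function `κ(I)` determines `κ`; hence `σ` preserves `κ`. It then follows that `I.image σ` has the
same size and the same twisted function as `I`, and admissibility forces `I.image σ = I`. -/

namespace Admissible

variable {X Y : Type*}

def twist [DecidableEq X] (κ : X → ℤ) (I : Finset X) (w : X) : ℤ :=
  if w ∈ I then 2 - κ w else κ w

theorem abs_twist_sub_one_add_one [DecidableEq X] {κ : X → ℤ} (I : Finset X) {w : X}
    (hκ : 1 ≤ κ w) :
    |twist κ I w - 1| + 1 = κ w := by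
  unfold twist
  split_ifs
  · rw [abs_of_nonpos (by linarith)]; ring
  · rw [abs_of_nonneg (by linarith)]; ring

theorem twist_image_apply [DecidableEq X] [DecidableEq Y] (κ : Y → ℤ) (I : Finset X) {f : X → Y}
    (hf : Function.Injective f) (w : X) :
    twist κ (I.image f) (f w) = twist (κ ∘ f) I w := by
  simp only [twist, hf.mem_finset_image, Function.comp_apply]

end Admissible

open Admissible

theorem admissible_fixed_field_general {X : Type*} [DecidableEq X]
    (κ : X → ℤ) (hκ : ∀ w, 1 ≤ κ w)
    (I : Finset X)
    (hadm : ∀ J : Finset X, J.card = I.card →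
      (fun w => if w ∈ J then 2 - κ w else κ w)
        = (fun w => if w ∈ I then 2 - κ w else κ w) → J = I)
    (σ : Equiv.Perm X)
    (hσ : ∀ w, (if σ w ∈ I then 2 - κ (σ w) else κ (σ w))
            = (if w ∈ I then 2 - κ w else κ w)) :
    (∀ w, κ (σ w) = κ w) ∧ I.image σ = I := by
  have hfix : ∀ w, κ (σ w) = κ w := fun w => by
    rw [← abs_twist_sub_one_add_one I (hκ (σ w)), ← abs_twist_sub_one_add_one I (hκ w)]
    exact congrArg (|· - 1| + 1) (hσ w)
  have hcomp : κ ∘ σ = κ := funext hfix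
  refine ⟨hfix, hadm _ (I.card_image_of_injective σ.injective) (funext fun w => ?_)⟩
  obtain ⟨v, rfl⟩ := σ.surjective w
  change twist κ (I.image σ) (σ v) = twist κ I (σ v)
  rw [twist_image_apply κ I σ.injective, hcomp]
  exact (hσ v).symm

/-- Let `X` be a finite set (playing the role of Σ_𝔼), `κ : X → ℤ` with `κ w ≥ 1`,
and `I ⊆ X` admissible with respect to `κ` (the only `J` with `#J = #I` and
`κ(J) = κ(I)` is `J = I`, where `κ(I)(w) = 2 - κ w` for `w ∈ I` and `κ w` otherwise).
If a bijection `σ : X → X` satisfies `κ(I)(σ w) = κ(I)(w)` for all `w`, then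
`κ (σ w) = κ w` for all `w` and `σ(I) = I`. -/
theorem admissible_fixed_field {X : Type*} [Fintype X] [DecidableEq X]
    (κ : X → ℤ) (hκ : ∀ w, 1 ≤ κ w)
    (I : Finset X)
    (hadm : ∀ J : Finset X, J.card = I.card →
      (fun w => if w ∈ J then 2 - κ w else κ w)
        = (fun w => if w ∈ I then 2 - κ w else κ w) → J = I)
    (σ : Equiv.Perm X)
    (hσ : ∀ w, (if σ w ∈ I then 2 - κ (σ w) else κ (σ w))
            = (if w ∈ I then 2 - κ w else κ w)) :
    (∀ w, κ (σ w) = κ w) ∧ I.image σ = I :=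
  admissible_fixed_field_general κ hκ I hadm σ hσ
end

section
/- Fix integers ℓ₂ ≥ 1, ℓ₃ ≥ 1 and M ≥ 0, and let (c_{m₁,m₂})_{m₁+m₂=M} be rational numbers, not all zero, satisfying the lowering relations. Then Σ_{m₁+m₂=M} (−1)^{m₁} c_{m₁,m₂} ≠ 0. (This is the nonvanishing of the constant C(κ, m′) asserted in the paper's proofs of Theorem 4.6 and of the archimedean-period Lemma 5.3.) -/
/-!
Along the antidiagonal `m₁ + m₂ = M`, the lowering relation expresses each signed coefficient
`(-1)^(m+1) c_{m+1, M-m-1}` as a *positive* multiple of `(-1)^m c_{m, M-m}`, because both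
factors `(a+1)(ℓ₂+a)` and `(b+1)(ℓ₃+b)` are positive. Hence all terms of the alternating sum
are positive multiples of its first term, which cannot vanish unless every `c_{m₁,m₂}` does.
-/

/-- A tuple `c` of rationals indexed by pairs `(m₁, m₂)` with `m₁ + m₂ = M`
satisfies the lowering relations if
`(a+1)(ℓ₂+a)·c_{a+1,b} + (b+1)(ℓ₃+b)·c_{a,b+1} = 0` whenever `a + b = M - 1`. -/
def LoweringRel (ℓ₂ ℓ₃ : ℤ) (M : ℕ) (c : ℕ → ℕ → ℚ) : Prop :=
  ∀ a b : ℕ, a + b + 1 = M →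
    ((a : ℚ) + 1) * ((ℓ₂ : ℚ) + a) * c (a + 1) b
      + ((b : ℚ) + 1) * ((ℓ₃ : ℚ) + b) * c a (b + 1) = 0

open Finset

section

variable {K : Type*}

theorem eq_prod_range_mul_of_succ_eq_mul [CommMonoid K] {M : ℕ} {t k : ℕ → K}
    (ht : ∀ m < M, t (m + 1) = k m * t m) :
    ∀ m ≤ M, t m = (∏ i ∈ range m, k i) * t 0
  | 0, _ => by simp
  | m + 1, hm => by
    rw [ht m hm, eq_prod_range_mul_of_succ_eq_mul ht m (Nat.le_of_succ_le hm), prod_range_succ,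
      mul_right_comm, mul_comm (k m)]

theorem sum_range_ne_zero_of_succ_eq_pos_mul [CommRing K] [LinearOrder K] [IsStrictOrderedRing K]
    {M : ℕ} {t k : ℕ → K} (hk : ∀ m < M, 0 < k m) (ht : ∀ m < M, t (m + 1) = k m * t m)
    (hne : ∃ m ≤ M, t m ≠ 0) :
    ∑ m ∈ range (M + 1), t m ≠ 0 := by
  have hprod := eq_prod_range_mul_of_succ_eq_mul ht
  have hprod_pos : ∀ m ≤ M, 0 < ∏ i ∈ range m, k i := fun m hm =>
    prod_pos fun i hi => hk i ((mem_range.1 hi).trans_le hm)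
  obtain ⟨a, ha, hta⟩ := hne
  have ht0 : t 0 ≠ 0 := fun h => hta (by rw [hprod a ha, h, mul_zero])
  have hsum : ∑ m ∈ range (M + 1), t m = (∑ m ∈ range (M + 1), ∏ i ∈ range m, k i) * t 0 := by
    rw [sum_mul]
    exact sum_congr rfl fun m hm => hprod m (mem_range_succ_iff.1 hm)
  have hsum_pos : 0 < ∑ m ∈ range (M + 1), ∏ i ∈ range m, k i :=
    sum_pos (fun m hm => hprod_pos m (mem_range_succ_iff.1 hm)) nonempty_range_add_one
  rw [hsum]
  exact mul_ne_zero hsum_pos.ne' ht0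

end

namespace LoweringRel

def ratio (ℓ₂ ℓ₃ : ℤ) (M m : ℕ) : ℚ :=
  (((M - m - 1 : ℕ) : ℚ) + 1) * ((ℓ₃ : ℚ) + (M - m - 1 : ℕ)) / (((m : ℚ) + 1) * ((ℓ₂ : ℚ) + m))

variable {ℓ₂ ℓ₃ : ℤ} {M : ℕ} {c : ℕ → ℕ → ℚ}

theorem ratio_pos (hℓ₂ : 0 < ℓ₂) (hℓ₃ : 0 < ℓ₃) (m : ℕ) : 0 < ratio ℓ₂ ℓ₃ M m := by
  have h₂ : (0 : ℚ) < ℓ₂ := by exact_mod_cast hℓ₂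
  have h₃ : (0 : ℚ) < ℓ₃ := by exact_mod_cast hℓ₃
  unfold ratio
  positivity

theorem alternating_succ (hc : LoweringRel ℓ₂ ℓ₃ M c) (hℓ₂ : 0 < ℓ₂) {m : ℕ} (hm : m < M) :
    (-1 : ℚ) ^ (m + 1) * c (m + 1) (M - (m + 1))
      = ratio ℓ₂ ℓ₃ M m * ((-1 : ℚ) ^ m * c m (M - m)) := by
  have hrel := hc m (M - m - 1) (by omega)
  rw [show M - m - 1 + 1 = M - m by omega] at hrel
  rw [show M - (m + 1) = M - m - 1 by omega]
  have : (0 : ℚ) < ℓ₂ := by exact_mod_cast hℓ₂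
  unfold ratio
  field_simp
  linear_combination (-(-1 : ℚ) ^ m) * hrel

end LoweringRel

/-- (Nonvanishing of the constant `C(κ, m′)` in the paper.) If the rationals
`c_{m₁,m₂}` (indexed by `m₁ + m₂ = M`) satisfy the lowering relations and are not
all zero, then `Σ_{m₁+m₂=M} (−1)^{m₁} c_{m₁,m₂} ≠ 0`. -/
theorem alternating_sum_ne_zero (ℓ₂ ℓ₃ : ℤ) (hℓ₂ : 1 ≤ ℓ₂) (hℓ₃ : 1 ≤ ℓ₃) (M : ℕ)
    (c : ℕ → ℕ → ℚ) (hc : LoweringRel ℓ₂ ℓ₃ M c)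
    (hne : ∃ a b : ℕ, a + b = M ∧ c a b ≠ 0) :
    ∑ m₁ ∈ Finset.range (M + 1), (-1 : ℚ) ^ m₁ * c m₁ (M - m₁) ≠ 0 := by
  obtain ⟨a, b, hab, hcab⟩ := hne
  refine sum_range_ne_zero_of_succ_eq_pos_mul (k := LoweringRel.ratio ℓ₂ ℓ₃ M)
    (fun m _ => LoweringRel.ratio_pos hℓ₂ hℓ₃ m) (fun m hm => hc.alternating_succ hℓ₂ hm)
    ⟨a, by omega, ?_⟩
  rw [show M - a = b by omega]
  exact mul_ne_zero (pow_ne_zero a (by norm_num)) hcab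
end

section
/- Let ℓ′ ≥ 1, m′ ≥ 1, m₁ ≥ 0, m₂ ≥ 0 be integers, and set A = ℓ′ + m′ + m₁ + m₂ and B = m′ + m₁ + m₂. Then Σ_{j=0}^{m₁} (−4π)^j · binom(m₁, j) · ((ℓ′+m₁−1)!/(ℓ′+j−1)!) · ∫₀^∞ a^{A+j−1} e^{−4πa} da/a = (−1)^{m₁} · (4π)^{1−A} · (A−2)! · (B−1)! / (m′+m₂−1)!. (This identity is the analytic evaluation underlying Lemma 4.4 of the paper, which computes the archimedean local Rankin–Selberg zeta integral Z(W⁻_{(ℓ,r)}, X₊^{m₁}·W⁺_{(ℓ′,r′)}, X₊^{m₂}·f_{Φ^{[m′]},s}) at s = m in closed form as a product of Gamma values; here ℓ = ℓ′ + m′ + 2m₁ + 2m₂, and all Gamma values have been rewritten as factorials via Γ(n) = (n−1)!.) -/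
/-!
Each integral is a Gamma value, `∫₀^∞ a^(k+1) e^(-b a) da/a = k! / b^(k+1)`, so the powers of `4π`
factor out. Writing `K = ℓ' - 1` and `M = m' + m₂ - 1`, what remains is
`(K+m₁)! (m₁+M)! · Σⱼ (-1)^j C(m₁,j) C(K+m₁+M+j, m₁+M)`. Up to the sign `(-1)^m₁` this
alternating sum is the `m₁`-th forward difference at `0` of `x ↦ C(x+K+m₁+M, m₁+M)`, which by
Pascal's rule equals `C(K+m₁+M, M)`.
-/

open MeasureTheory Real Finset

theorem alternating_sum_choose_mul_choose_add (n a j : ℕ) :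
    ∑ k ∈ range (n + 1), (-1 : ℤ) ^ k * n.choose k * (a + k).choose (n + j)
      = (-1) ^ n * a.choose j := by
  have h := fwdDiff_iter_eq_sum_shift 1 (fun x ↦ (x + a).choose (n + j) : ℕ → ℤ) n 0
  rw [fwdDiff_iter_comp_add 1 (fun x ↦ x.choose (n + j) : ℕ → ℤ), fwdDiff_iter_choose] at h
  simp only [zero_add, smul_eq_mul, mul_one] at h
  rw [h, mul_sum]
  refine sum_congr rfl fun k hk ↦ ?_
  obtain ⟨i, rfl⟩ := Nat.exists_eq_add_of_le' (Nat.lt_succ_iff.mp (mem_range.mp hk))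
  have hsq : (-1 : ℤ) ^ i * (-1) ^ i = 1 := by rw [← mul_pow]; norm_num
  rw [Nat.add_sub_cancel, add_comm k a, pow_add]
  linear_combination (-(-1) ^ k * ((i + k).choose k : ℤ) * (a + k).choose (i + k + j)) * hsq

theorem integral_pow_mul_exp_neg_mul_Ioi (k : ℕ) {b : ℝ} (hb : 0 < b) :
    ∫ a in Set.Ioi (0 : ℝ), a ^ k * exp (-b * a) = k.factorial / b ^ (k + 1) := by
  have h := integral_rpow_mul_exp_neg_mul_Ioi (a := k + 1) (by positivity) hb
  rw [add_sub_cancel_right, Gamma_nat_eq_factorial, ← Nat.cast_succ, rpow_natCast,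
    div_pow, one_pow, one_div_mul_eq_div] at h
  rw [← h]
  refine setIntegral_congr_fun measurableSet_Ioi fun a _ ↦ ?_
  simp [rpow_natCast, neg_mul]

theorem integral_pow_succ_mul_exp_neg_mul_div_Ioi (k : ℕ) {b : ℝ} (hb : 0 < b) :
    ∫ a in Set.Ioi (0 : ℝ), a ^ (k + 1) * exp (-b * a) / a = k.factorial / b ^ (k + 1) := by
  rw [← integral_pow_mul_exp_neg_mul_Ioi k hb]
  refine setIntegral_congr_fun measurableSet_Ioi fun a (ha : 0 < a) ↦ ?_
  rw [pow_succ']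
  field_simp

theorem sum_neg_one_pow_mul_choose_mul_factorial_ratio (K M n : ℕ) :
    ∑ j ∈ range (n + 1), (-1 : ℝ) ^ j * n.choose j *
        ((K + n).factorial / (K + j).factorial : ℝ) * (K + j + n + M).factorial
      = (-1) ^ n * (K + n + M).factorial * (n + M).factorial / M.factorial := by
  have hchoose : ∀ a b : ℕ,
      ((a + b).factorial : ℝ) = (a + b).choose b * a.factorial * b.factorial :=
    fun a b ↦ by exact_mod_cast (Nat.add_choose_mul_factorial_mul_factorial a b).symm
  have halt : ∑ j ∈ range (n + 1), (-1 : ℝ) ^ j * n.choose j * (K + n + M + j).choose (n + M)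
      = (-1) ^ n * (K + n + M).choose M := by
    exact_mod_cast alternating_sum_choose_mul_choose_add n (K + n + M) M
  calc _ = ∑ j ∈ range (n + 1), (K + n).factorial * (n + M).factorial *
        ((-1 : ℝ) ^ j * n.choose j * (K + n + M + j).choose (n + M)) := by
        refine sum_congr rfl fun j _ ↦ ?_
        rw [show K + j + n + M = K + j + (n + M) by ring, hchoose (K + j) (n + M),
          show K + n + M + j = K + j + (n + M) by ring]
        field_simp
    _ = _ := by
        rw [← mul_sum, halt, hchoose (K + n) M]
        field_simp

theorem sum_neg_pow_mul_choose_mul_factorial_ratio_mul_integral (K M n : ℕ) {b : ℝ}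
    (hb : 0 < b) :
    ∑ j ∈ range (n + 1), (-b) ^ j * n.choose j *
        ((K + n).factorial / (K + j).factorial : ℝ) *
        ∫ a in Set.Ioi (0 : ℝ), a ^ (K + j + n + M + 1) * exp (-b * a) / a
      = (-1) ^ n * (K + n + M).factorial * (n + M).factorial / M.factorial
          / b ^ (K + n + M + 1) := by
  rw [← sum_neg_one_pow_mul_choose_mul_factorial_ratio K M n, sum_div]
  refine sum_congr rfl fun j _ ↦ ?_
  rw [integral_pow_succ_mul_exp_neg_mul_div_Ioi _ hb, neg_pow,
    show K + j + n + M + 1 = j + (K + n + M + 1) by ring, pow_add]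
  field_simp

/-- (Analytic evaluation underlying Lemma 4.4 of the paper.)
For integers `ℓ′, m′ ≥ 1` and `m₁, m₂ ≥ 0`, with `A = ℓ′ + m′ + m₁ + m₂` and
`B = m′ + m₁ + m₂`, one has
`Σ_{j=0}^{m₁} (−4π)^j · C(m₁,j) · (ℓ′+m₁−1)!/(ℓ′+j−1)! · ∫₀^∞ a^{A+j−1} e^{−4πa} da/a
  = (−1)^{m₁} (4π)^{1−A} (A−2)! (B−1)! / (m′+m₂−1)!`. -/
theorem archimedean_zeta_integral (ℓ' m' m₁ m₂ : ℕ) (hℓ' : 1 ≤ ℓ') (hm' : 1 ≤ m') :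
    (∑ j ∈ Finset.range (m₁ + 1),
      (-4 * π) ^ j * (m₁.choose j : ℝ) *
        (((ℓ' + m₁ - 1).factorial : ℝ) / ((ℓ' + j - 1).factorial : ℝ)) *
        ∫ a in Set.Ioi (0 : ℝ),
          a ^ (ℓ' + m' + m₁ + m₂ + j - 1) * Real.exp (-4 * π * a) / a)
    = (-1 : ℝ) ^ m₁ * (4 * π) ^ (1 - (ℓ' + m' + m₁ + m₂ : ℤ)) *
        ((ℓ' + m' + m₁ + m₂ - 2).factorial : ℝ) *
        ((m' + m₁ + m₂ - 1).factorial : ℝ) / ((m' + m₂ - 1).factorial : ℝ) := by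
  obtain ⟨K, rfl⟩ := Nat.exists_eq_add_of_le' hℓ'
  obtain ⟨N, rfl⟩ := Nat.exists_eq_add_of_le' hm'
  have hzpow : (4 * π) ^ (1 - ((K + 1 : ℕ) + (N + 1 : ℕ) + m₁ + m₂ : ℤ))
      = ((4 * π) ^ (K + m₁ + (N + m₂) + 1))⁻¹ := by
    rw [← zpow_natCast, ← zpow_neg]
    push_cast
    ring_nf
  calc _ = ∑ j ∈ range (m₁ + 1), (-(4 * π)) ^ j * m₁.choose j *
        ((K + m₁).factorial / (K + j).factorial : ℝ) *
        ∫ a in Set.Ioi (0 : ℝ),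
          a ^ (K + j + m₁ + (N + m₂) + 1) * exp (-(4 * π) * a) / a := by
        refine sum_congr rfl fun j _ ↦ ?_
        rw [neg_mul, show K + 1 + m₁ - 1 = K + m₁ by omega, show K + 1 + j - 1 = K + j by omega,
          show K + 1 + (N + 1) + m₁ + m₂ + j - 1 = K + j + m₁ + (N + m₂) + 1 by omega]
    _ = _ := sum_neg_pow_mul_choose_mul_factorial_ratio_mul_integral K (N + m₂) m₁
          (by positivity)
    _ = _ := by
        rw [hzpow, show K + 1 + (N + 1) + m₁ + m₂ - 2 = K + m₁ + (N + m₂) by omega,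
          show N + 1 + m₁ + m₂ - 1 = m₁ + (N + m₂) by omega,
          show N + 1 + m₂ - 1 = N + m₂ by omega]
        ring
end

section
/- Let k be a field of characteristic zero, L a Lie algebra over k, and V, W Lie modules over L. Let e, f, h ∈ L satisfy ⁅h, e⁆ = 2•e and ⁅e, f⁆ = −4•h. Let ℓ₂ ≥ 1 and ℓ₃ ≥ 1 be integers, and let v ∈ V and w ∈ W satisfy h·v = ℓ₂•v, f·v = 0, h·w = ℓ₃•w, f·w = 0. Let ℓ₁ be an integer with ℓ₁ ≥ ℓ₂ + ℓ₃ and ℓ₁ ≡ ℓ₂ + ℓ₃ (mod 2), and set M = (ℓ₁ − ℓ₂ − ℓ₃)/2. Then there exist rational numbers c_{m₁,m₂} (indexed by nonnegative integers m₁, m₂ with m₁ + m₂ = M), not all zero, such that the element u = Σ_{m₁+m₂=M} c_{m₁,m₂} • (e^{m₁}·v ⊗ e^{m₂}·w) of V ⊗ W satisfies h·u = ℓ₁•u and f·u = 0. (This is the existence half of Lemma 3.1 of the paper, with no hypothesis of linear independence; it produces the ℚ-rational trilinear differential operator used in Proposition 3.2.) -/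
/-!
Write `E` for the action of `e`. From `⁅h, e⁆ = 2e` and `⁅f, e⁆ = 4h` one gets
`h·Eᵐv = (ℓ₂ + 2m)Eᵐv` and `f·Eᵐ⁺¹v = 4(m+1)(ℓ₂+m)Eᵐv`, and likewise for `w`. Hence every
combination of the `Eᵃv ⊗ Eᵇw` with `a + b = M` has `h`-weight `ℓ₂ + ℓ₃ + 2M = ℓ₁`, and `f` sends it
to the combination of the `Eᵃv ⊗ Eᵇw` with `a + b = M - 1` with coefficients
`4(c_{a+1,b}(a+1)(ℓ₂+a) + c_{a,b+1}(b+1)(ℓ₃+b))`. For `c_{a,b} = (-1)ᵃ / (a! b! (ℓ₂)ₐ (ℓ₃)_b)`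
the two summands are `-c_{a,b}` and `c_{a,b}`, so they cancel.
-/

open scoped TensorProduct

/-- The linear combination `Σ_{m₁+m₂=M} c_{m₁,m₂} • (e^{m₁}·v ⊗ e^{m₂}·w)` in
`V ⊗ W`, for a family of rational coefficients `c`. -/
noncomputable def ratTensorComb (k : Type*) [Field k]
    {L : Type*} [LieRing L] [LieAlgebra k L]
    {V : Type*} [AddCommGroup V] [Module k V] [LieRingModule L V]
    {W : Type*} [AddCommGroup W] [Module k W] [LieRingModule L W]
    (e : L) (v : V) (w : W) (M : ℕ) (c : ℕ → ℕ → ℚ) : V ⊗[k] W :=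
  ∑ i ∈ Finset.range (M + 1), ((c i (M - i) : ℚ) : k) •
    (((fun x => ⁅e, x⁆)^[i] v) ⊗ₜ[k] ((fun x => ⁅e, x⁆)^[M - i] w))

open Finset

section Module

variable {k : Type*} [CommRing k] {L : Type*} [LieRing L] [LieAlgebra k L]
  {V : Type*} [AddCommGroup V] [Module k V] [LieRingModule L V] [LieModule k L V]
  {e f h : L} {μ : k} {v : V}

theorem lie_h_iterate_lie_e (hhe : ⁅h, e⁆ = (2 : k) • e) (hhv : ⁅h, v⁆ = μ • v) (m : ℕ) :
    ⁅h, (⁅e, ·⁆)^[m] v⁆ = (μ + 2 * m) • (⁅e, ·⁆)^[m] v := by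
  induction m with
  | zero => simpa using hhv
  | succ m ih =>
    rw [Function.iterate_succ_apply', leibniz_lie, ih, hhe, lie_smul, smul_lie]
    push_cast
    module

theorem lie_f_iterate_lie_e_succ (hhe : ⁅h, e⁆ = (2 : k) • e) (hef : ⁅e, f⁆ = (-4 : k) • h)
    (hhv : ⁅h, v⁆ = μ • v) (hfv : ⁅f, v⁆ = 0) (m : ℕ) :
    ⁅f, (⁅e, ·⁆)^[m + 1] v⁆ = (4 * (m + 1) * (μ + m)) • (⁅e, ·⁆)^[m] v := by
  have hfe : ⁅f, e⁆ = (4 : k) • h := by rw [← lie_skew, hef]; module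
  induction m with
  | zero =>
    rw [Function.iterate_zero_apply, zero_add, Function.iterate_one, leibniz_lie, hfv, lie_zero,
      add_zero, hfe, smul_lie, hhv]
    push_cast
    module
  | succ m ih =>
    rw [Function.iterate_succ_apply', leibniz_lie, ih, hfe, smul_lie, lie_smul,
      lie_h_iterate_lie_e hhe hhv, Function.iterate_succ_apply']
    push_cast
    module

end Module

section TensorProduct

variable {k : Type*} [Field k] {L : Type*} [LieRing L] [LieAlgebra k L]
  {V : Type*} [AddCommGroup V] [Module k V] [LieRingModule L V]
  {W : Type*} [AddCommGroup W] [Module k W] [LieRingModule L W]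
  {e f h : L} {μ ν : k} {v : V} {w : W}

theorem ratTensorComb_eq_sum_antidiagonal (M : ℕ) (c : ℕ → ℕ → ℚ) :
    ratTensorComb k e v w M c = ∑ p ∈ antidiagonal M,
      ((c p.1 p.2 : ℚ) : k) • ((⁅e, ·⁆)^[p.1] v ⊗ₜ[k] (⁅e, ·⁆)^[p.2] w) := by
  rw [Nat.sum_antidiagonal_eq_sum_range_succ_mk]; rfl

variable [LieModule k L V] [LieModule k L W]

theorem lie_h_ratTensorComb (hhe : ⁅h, e⁆ = (2 : k) • e) (hhv : ⁅h, v⁆ = μ • v)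
    (hhw : ⁅h, w⁆ = ν • w) (M : ℕ) (c : ℕ → ℕ → ℚ) :
    ⁅h, ratTensorComb k e v w M c⁆ = (μ + ν + 2 * M) • ratTensorComb k e v w M c := by
  rw [ratTensorComb_eq_sum_antidiagonal, lie_sum, smul_sum]
  refine sum_congr rfl fun p hp => ?_
  rw [lie_smul, TensorProduct.LieModule.lie_tmul_right, lie_h_iterate_lie_e hhe hhv,
    lie_h_iterate_lie_e hhe hhw, ← TensorProduct.smul_tmul', TensorProduct.tmul_smul,
    ← mem_antidiagonal.1 hp]
  push_cast
  module

theorem lie_f_ratTensorComb_succ (hhe : ⁅h, e⁆ = (2 : k) • e) (hef : ⁅e, f⁆ = (-4 : k) • h)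
    (hhv : ⁅h, v⁆ = μ • v) (hfv : ⁅f, v⁆ = 0) (hhw : ⁅h, w⁆ = ν • w) (hfw : ⁅f, w⁆ = 0)
    (N : ℕ) (c : ℕ → ℕ → ℚ) :
    ⁅f, ratTensorComb k e v w (N + 1) c⁆ = ∑ p ∈ antidiagonal N,
      (4 * ((c (p.1 + 1) p.2 : k) * ((p.1 + 1) * (μ + p.1))
        + (c p.1 (p.2 + 1) : k) * ((p.2 + 1) * (ν + p.2)))) •
        ((⁅e, ·⁆)^[p.1] v ⊗ₜ[k] (⁅e, ·⁆)^[p.2] w) := by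
  have lower_left : ∑ p ∈ antidiagonal (N + 1),
      (c p.1 p.2 : k) • (⁅f, (⁅e, ·⁆)^[p.1] v⁆ ⊗ₜ[k] (⁅e, ·⁆)^[p.2] w) = ∑ p ∈ antidiagonal N,
      ((c (p.1 + 1) p.2 : k) * (4 * (p.1 + 1) * (μ + p.1))) •
        ((⁅e, ·⁆)^[p.1] v ⊗ₜ[k] (⁅e, ·⁆)^[p.2] w) := by
    simp only [Nat.sum_antidiagonal_succ, Function.iterate_zero_apply, hfv,
      TensorProduct.zero_tmul, smul_zero, zero_add, lie_f_iterate_lie_e_succ hhe hef hhv hfv,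
      ← TensorProduct.smul_tmul', smul_smul]
  have lower_right : ∑ p ∈ antidiagonal (N + 1),
      (c p.1 p.2 : k) • ((⁅e, ·⁆)^[p.1] v ⊗ₜ[k] ⁅f, (⁅e, ·⁆)^[p.2] w⁆) = ∑ p ∈ antidiagonal N,
      ((c p.1 (p.2 + 1) : k) * (4 * (p.2 + 1) * (ν + p.2))) •
        ((⁅e, ·⁆)^[p.1] v ⊗ₜ[k] (⁅e, ·⁆)^[p.2] w) := by
    simp only [Nat.sum_antidiagonal_succ', Function.iterate_zero_apply, hfw,
      TensorProduct.tmul_zero, smul_zero, zero_add, lie_f_iterate_lie_e_succ hhe hef hhw hfw,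
      TensorProduct.tmul_smul, smul_smul]
  simp only [ratTensorComb_eq_sum_antidiagonal, lie_sum, lie_smul,
    TensorProduct.LieModule.lie_tmul_right, smul_add, sum_add_distrib, lower_left, lower_right]
  rw [← sum_add_distrib]
  refine sum_congr rfl fun p _ => ?_
  rw [← add_smul]
  congr 1
  ring

theorem lie_f_ratTensorComb_eq_zero (hhe : ⁅h, e⁆ = (2 : k) • e) (hef : ⁅e, f⁆ = (-4 : k) • h)
    (hhv : ⁅h, v⁆ = μ • v) (hfv : ⁅f, v⁆ = 0) (hhw : ⁅h, w⁆ = ν • w) (hfw : ⁅f, w⁆ = 0)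
    (M : ℕ) {c : ℕ → ℕ → ℚ} (hc : ∀ a b, (c (a + 1) b : k) * ((a + 1) * (μ + a))
      + (c a (b + 1) : k) * ((b + 1) * (ν + b)) = 0) :
    ⁅f, ratTensorComb k e v w M c⁆ = 0 := by
  cases M with
  | zero => simp [ratTensorComb, hfv, hfw]
  | succ N => simp [lie_f_ratTensorComb_succ hhe hef hhv hfv hhw hfw, hc]

end TensorProduct

section RankinCohenCoeff

open Nat Polynomial

/-- Up to normalisation, the coefficients of the Rankin–Cohen bracket of weights `μ` and `ν`. -/
noncomputable def rankinCohenCoeff (μ ν : ℚ) (a b : ℕ) : ℚ :=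
  (-1) ^ a / (a ! * b ! * (ascPochhammer ℚ a).eval μ * (ascPochhammer ℚ b).eval ν)

variable {μ ν : ℚ}

theorem rankinCohenCoeff_ne_zero (hμ : 0 < μ) (hν : 0 < ν) (a b : ℕ) :
    rankinCohenCoeff μ ν a b ≠ 0 := by
  have := ascPochhammer_pos a μ hμ
  have := ascPochhammer_pos b ν hν
  unfold rankinCohenCoeff
  positivity

theorem rankinCohenCoeff_succ_left_mul (hμ : 0 < μ) (a b : ℕ) :
    rankinCohenCoeff μ ν (a + 1) b * ((a + 1) * (μ + a)) = -rankinCohenCoeff μ ν a b := by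
  have : μ + a ≠ 0 := by positivity
  unfold rankinCohenCoeff
  rw [ascPochhammer_succ_eval, factorial_succ]
  push_cast
  field_simp
  ring

theorem rankinCohenCoeff_succ_right_mul (hν : 0 < ν) (a b : ℕ) :
    rankinCohenCoeff μ ν a (b + 1) * ((b + 1) * (ν + b)) = rankinCohenCoeff μ ν a b := by
  have : ν + b ≠ 0 := by positivity
  unfold rankinCohenCoeff
  rw [ascPochhammer_succ_eval, factorial_succ]
  push_cast
  field_simp

theorem rankinCohenCoeff_recurrence (hμ : 0 < μ) (hν : 0 < ν) (a b : ℕ) :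
    rankinCohenCoeff μ ν (a + 1) b * ((a + 1) * (μ + a))
      + rankinCohenCoeff μ ν a (b + 1) * ((b + 1) * (ν + b)) = 0 := by
  rw [rankinCohenCoeff_succ_left_mul hμ, rankinCohenCoeff_succ_right_mul hν, neg_add_cancel]

end RankinCohenCoeff

/-- (Existence half of Lemma 3.1 of the paper.)  Let `L` be a Lie algebra over a
field `k` of characteristic zero acting on Lie modules `V`, `W`, with
`⁅h, e⁆ = 2•e` and `⁅e, f⁆ = −4•h`, and let `v`, `w` be `h`-eigenvectors of
eigenvalues `ℓ₂, ℓ₃ ≥ 1` killed by `f`.  If `ℓ₁ ≥ ℓ₂ + ℓ₃`,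
`ℓ₁ ≡ ℓ₂ + ℓ₃ (mod 2)`, and `M = (ℓ₁ − ℓ₂ − ℓ₃)/2`, then there exist rational
numbers `c_{m₁,m₂}` (`m₁ + m₂ = M`), not all zero, such that
`u = Σ c_{m₁,m₂} • (e^{m₁}·v ⊗ e^{m₂}·w)` satisfies `h·u = ℓ₁•u` and `f·u = 0`. -/
theorem trilinear_operator_exists {k : Type*} [Field k] [CharZero k]
    {L : Type*} [LieRing L] [LieAlgebra k L]
    {V : Type*} [AddCommGroup V] [Module k V] [LieRingModule L V] [LieModule k L V]
    {W : Type*} [AddCommGroup W] [Module k W] [LieRingModule L W] [LieModule k L W]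
    (e f h : L) (hhe : ⁅h, e⁆ = (2 : k) • e) (hef : ⁅e, f⁆ = (-4 : k) • h)
    (ℓ₁ ℓ₂ ℓ₃ : ℤ) (hℓ₂ : 1 ≤ ℓ₂) (hℓ₃ : 1 ≤ ℓ₃)
    (hge : ℓ₂ + ℓ₃ ≤ ℓ₁) (hpar : ℓ₁ % 2 = (ℓ₂ + ℓ₃) % 2)
    (v : V) (w : W)
    (hhv : ⁅h, v⁆ = ((ℓ₂ : ℤ) : k) • v) (hfv : ⁅f, v⁆ = 0)
    (hhw : ⁅h, w⁆ = ((ℓ₃ : ℤ) : k) • w) (hfw : ⁅f, w⁆ = 0) :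
    ∃ c : ℕ → ℕ → ℚ,
      (∃ a b : ℕ, a + b = ((ℓ₁ - ℓ₂ - ℓ₃) / 2).toNat ∧ c a b ≠ 0) ∧
      ⁅h, ratTensorComb k e v w ((ℓ₁ - ℓ₂ - ℓ₃) / 2).toNat c⁆
        = ((ℓ₁ : ℤ) : k) • ratTensorComb k e v w ((ℓ₁ - ℓ₂ - ℓ₃) / 2).toNat c ∧
      ⁅f, ratTensorComb k e v w ((ℓ₁ - ℓ₂ - ℓ₃) / 2).toNat c⁆ = 0 := by
  set M := ((ℓ₁ - ℓ₂ - ℓ₃) / 2).toNat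
  have hM : ((ℓ₁ : ℤ) : k) = ℓ₂ + ℓ₃ + 2 * M := by
    have : ℓ₁ = ℓ₂ + ℓ₃ + 2 * (M : ℤ) := by omega
    exact_mod_cast this
  have hμ : (0 : ℚ) < ℓ₂ := by exact_mod_cast hℓ₂
  have hν : (0 : ℚ) < ℓ₃ := by exact_mod_cast hℓ₃
  refine ⟨rankinCohenCoeff ℓ₂ ℓ₃, ⟨0, M, zero_add M, rankinCohenCoeff_ne_zero hμ hν 0 M⟩, ?_, ?_⟩
  · rw [lie_h_ratTensorComb hhe hhv hhw, hM]
  · exact lie_f_ratTensorComb_eq_zero hhe hef hhv hfv hhw hfw M fun a b => by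
      exact_mod_cast rankinCohenCoeff_recurrence hμ hν a b
end
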